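/- Let G, H be directed weighted graphs with weights in (0,1], and let Ĥ be the simple graph obtained from H by merging, for each ordered pair of vertices (v,w), all edges from v to w into one edge whose weight is the (possibly infinite) sum of their weights. Then, extending the measurement to weights > 1 by ⟪F,G⟫ = Σ_{π ∈ C(F,G)} Σ_{k≥1} ω(π)^k/k, we have ⟪G, H⟫ = ⟪G, Ĥ⟫. -/

import Mathlib

open scoped ENNReal

/-- A directed weighted graph with a definite (finite) set of vertex locations. -/
structure EGraph (V : Type) where
  verts : Finset V
  E : Type
  src : E → V
  tgt : E → V
  w : E → ℝ≥0∞
  src_mem : ∀ e, src e ∈ verts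
  tgt_mem : ∀ e, tgt e ∈ verts

namespace EGraph

variable {V : Type} [DecidableEq V]

/-- source of an edge of the plugging `G □ H` -/
def psrc (G H : EGraph V) : G.E ⊕ H.E → V := Sum.elim G.src H.src

/-- target of an edge of the plugging `G □ H` -/
def ptgt (G H : EGraph V) : G.E ⊕ H.E → V := Sum.elim G.tgt H.tgt

/-- weight of an edge of the plugging `G □ H` -/
def pw (G H : EGraph V) : G.E ⊕ H.E → ℝ≥0∞ := Sum.elim G.w H.w

/-- An alternating path in the plugging `G □ H`: a nonempty composable sequence of
colored edges whose consecutive edges have distinct colors. -/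
structure AltPath (G H : EGraph V) where
  edges : List (G.E ⊕ H.E)
  ne : edges ≠ []
  chain : edges.Chain' (fun e f => ptgt G H e = psrc G H f ∧ e.isLeft ≠ f.isLeft)

variable {G H : EGraph V}

def AltPath.src (p : AltPath G H) : V := psrc G H (p.edges.head p.ne)
def AltPath.tgt (p : AltPath G H) : V := ptgt G H (p.edges.getLast p.ne)

noncomputable def AltPath.weight (p : AltPath G H) : ℝ≥0∞ :=
  (p.edges.map (pw G H)).prod

/-- An alternating cycle: the target of the last edge is the source of the first one,
and moreover the colors of the last and first edges differ. -/
def AltPath.IsCycle (p : AltPath G H) : Prop :=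
  p.tgt = p.src ∧ (p.edges.getLast p.ne).isLeft ≠ (p.edges.head p.ne).isLeft

/-- A list is primitive (a `1`-cycle) when it is not a proper power of a shorter list. -/
def PrimitiveList {α : Type*} (l : List α) : Prop :=
  ∀ (k : ℕ) (r : List α), l = (List.replicate k r).flatten → k = 1

def AltPath.IsOneCycle (p : AltPath G H) : Prop := p.IsCycle ∧ PrimitiveList p.edges

/-- Equivalence of alternating 1-cycles up to cyclic permutation. -/
def cycSetoid (G H : EGraph V) : Setoid {p : AltPath G H // p.IsOneCycle} where
  r p q := ∃ k, q.1.edges = p.1.edges.rotate k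
  iseqv := by
    constructor
    · exact fun p => ⟨0, (p.1.edges.rotate_zero).symm⟩
    · rintro p q ⟨k, hk⟩
      refine ⟨p.1.edges.length * (k + 1) - k, ?_⟩
      rw [hk, List.rotate_rotate]
      rcases Nat.eq_zero_or_pos p.1.edges.length with h0 | hpos
      · rw [List.length_eq_zero_iff] at h0
        simp [h0]
      · have hkle : k ≤ p.1.edges.length * (k + 1) := by nlinarith
        rw [Nat.add_sub_cancel' hkle, List.rotate_length_mul]
    · rintro p q r ⟨k, hk⟩ ⟨m, hm⟩
      exact ⟨k + m, by rw [hm, hk, List.rotate_rotate]⟩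

/-- The set of alternating 1-circuits between `G` and `H`: alternating 1-cycles up to
cyclic permutation. -/
def Circ (G H : EGraph V) := Quotient (cycSetoid G H)

/-- The weight of a circuit. -/
noncomputable def cweight {G H : EGraph V} : Circ G H → ℝ≥0∞ :=
  Quotient.lift (fun p => p.1.weight)
    (by
      rintro p q ⟨k, hk⟩
      show p.1.weight = q.1.weight
      unfold AltPath.weight
      rw [hk]
      exact (((p.1.edges.map (pw G H)).rotate_perm k).prod_eq).symm.trans (by rw [List.map_rotate]))

/-- `-log(1-x)`, valued in `[0,∞]`, with the convention `log 0 = -∞`. -/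
noncomputable def mval (x : ℝ≥0∞) : ℝ≥0∞ :=
  if 1 ≤ x then ⊤ else ENNReal.ofReal (-Real.log (1 - x.toReal))

/-- The measurement `⟪G,H⟫ = Σ_{π ∈ C(G,H)} -log(1-ω(π))`. -/
noncomputable def meas (G H : EGraph V) : ℝ≥0∞ := ∑' c : Circ G H, mval (cweight c)

/-- The extended measurement value `Σ_{k ≥ 1} x^k / k`. -/
noncomputable def mvalExt (x : ℝ≥0∞) : ℝ≥0∞ := ∑' k : ℕ, x ^ (k + 1) / (k + 1)

/-- The measurement extended to arbitrary weights. -/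
noncomputable def measExt (G H : EGraph V) : ℝ≥0∞ := ∑' c : Circ G H, mvalExt (cweight c)

/-- The union of two graphs: union of the vertices, disjoint union of the edges. -/
def union (G H : EGraph V) : EGraph V where
  verts := G.verts ∪ H.verts
  E := G.E ⊕ H.E
  src := psrc G H
  tgt := ptgt G H
  w := pw G H
  src_mem := by
    rintro (e | e)
    · exact Finset.mem_union_left _ (G.src_mem e)
    · exact Finset.mem_union_right _ (H.src_mem e)
  tgt_mem := by
    rintro (e | e)
    · exact Finset.mem_union_left _ (G.tgt_mem e)
    · exact Finset.mem_union_right _ (H.tgt_mem e)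

/-- The reduction `G ∷ H`: vertices the symmetric difference, edges the alternating
paths with endpoints in the symmetric difference, weighted multiplicatively. -/
noncomputable def reduct (G H : EGraph V) : EGraph V where
  verts := symmDiff G.verts H.verts
  E := {p : AltPath G H //
        p.src ∈ symmDiff G.verts H.verts ∧ p.tgt ∈ symmDiff G.verts H.verts}
  src := fun p => p.1.src
  tgt := fun p => p.1.tgt
  w := fun p => p.1.weight
  src_mem := fun p => p.2.1
  tgt_mem := fun p => p.2.2

/-- The collapsed (simple) graph `Ĝ`, with weights the sums of the weights of parallel
edges. -/
noncomputable def adj (G : EGraph V) (v u : V) : ℝ≥0∞ :=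
  ∑' e : {e : G.E // G.src e = v ∧ G.tgt e = u}, G.w e.1

noncomputable def collapse (G : EGraph V) : EGraph V where
  verts := G.verts
  E := {p : V × V // ∃ e : G.E, G.src e = p.1 ∧ G.tgt e = p.2}
  src := fun p => p.1.1
  tgt := fun p => p.1.2
  w := fun p => adj G p.1.1 p.1.2
  src_mem := fun p => by obtain ⟨e, he, _⟩ := p.2; show p.1.1 ∈ G.verts; rw [← he]; exact G.src_mem e
  tgt_mem := fun p => by obtain ⟨e, _, he⟩ := p.2; show p.1.2 ∈ G.verts; rw [← he]; exact G.tgt_mem e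

end EGraph

open EGraph

/-!
Expanding `Σ_k ω(π)^k / k` over circuits turns `⟪G, H⟫` into the sum of `ω(w) / |w|` over
all alternating closed walks `w` with a marked starting edge: such a walk is uniquely the `(k+1)`-st
power of a rotation of a primitive cycle (the primitive root is read off from the rotation period
of the list), and a circuit `π` has exactly `|π|` distinct rotations, which cancels the `1 / |w|`.
In this closed-walk sum collapsing parallel edges only regroups terms: the walks of `G □ H` lying
over a walk of `G □ Ĥ` have the same length, and their weights add up to its weight, because a
product of sums is the sum of the products.
-/

open Function

namespace List

variable {α β : Type*} {l r : List α} {k : ℕ}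

theorem length_flatten_replicate (k : ℕ) (r : List α) :
    ((replicate k r).flatten).length = k * r.length := by
  simp [length_flatten]

theorem getElem?_flatten_replicate {i : ℕ} (hi : i < k * r.length) :
    ((replicate k r).flatten)[i]? = r[i % r.length]? := by
  induction k generalizing i with
  | zero => simp at hi
  | succ k ih =>
    rw [replicate_succ, flatten_cons]
    rcases lt_or_ge i r.length with h | h
    · rw [getElem?_append_left h, Nat.mod_eq_of_lt h]
    · rw [Nat.succ_mul] at hi
      rw [getElem?_append_right h, ih (by omega), Nat.mod_eq_sub_mod h]

theorem flatten_replicate_mul (a b : ℕ) (r : List α) :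
    (replicate (a * b) r).flatten = (replicate a (replicate b r).flatten).flatten := by
  rw [← flatten_replicate_replicate, flatten_flatten, map_replicate]

theorem take_flatten_replicate {j : ℕ} (hj : j ≤ k) (r : List α) :
    ((replicate k r).flatten).take (j * r.length) = (replicate j r).flatten := by
  obtain ⟨c, rfl⟩ := Nat.exists_eq_add_of_le hj
  rw [replicate_add, flatten_append, take_left' (length_flatten_replicate j r)]

theorem rotate_flatten_replicate_length (k : ℕ) (r : List α) :
    ((replicate k r).flatten).rotate r.length = (replicate k r).flatten := by
  cases k with
  | zero => simp
  | succ k =>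
    calc ((replicate (k + 1) r).flatten).rotate r.length = (replicate k r).flatten ++ r := by
          rw [replicate_succ, flatten_cons, rotate_append_length_eq]
      _ = (replicate (k + 1) r).flatten := by rw [← flatten_concat, ← replicate_succ']

theorem isChain_cons_flatten_replicate {R : α → α → Prop} {a : α} (ha : r.getLast? = some a)
    (hk : k ≠ 0) : IsChain R (a :: (replicate k r).flatten) ↔ IsChain R (a :: r) := by
  induction k with
  | zero => exact absurd rfl hk
  | succ k ih =>
    rcases eq_or_ne k 0 with rfl | hk'
    · simp
    have hlast : (a :: (replicate k r).flatten).getLast? = some a := by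
      rw [getLast?_cons, getLast?_flatten_replicate hk', ha]
      rfl
    rw [replicate_succ', flatten_concat, ← cons_append, isChain_append, ih hk', hlast,
      isChain_cons]
    simp only [Option.mem_def, Option.some.injEq, forall_eq']
    tauto

noncomputable def rotationPeriod (l : List α) : ℕ := minimalPeriod (rotate · 1) l

theorem iterate_rotate_one (l : List α) (n : ℕ) : (rotate · 1)^[n] l = l.rotate n := by
  induction n with
  | zero => simp
  | succ n ih => rw [iterate_succ_apply', ih, rotate_rotate]

theorem rotate_eq_self_iff_rotationPeriod_dvd {n : ℕ} :
    l.rotate n = l ↔ l.rotationPeriod ∣ n := by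
  rw [rotationPeriod, ← isPeriodicPt_iff_minimalPeriod_dvd, IsPeriodicPt, IsFixedPt,
    iterate_rotate_one]

theorem rotationPeriod_dvd_length (l : List α) : l.rotationPeriod ∣ l.length :=
  rotate_eq_self_iff_rotationPeriod_dvd.1 (rotate_length l)

theorem rotationPeriod_pos (l : List α) : 0 < l.rotationPeriod := by
  rcases eq_or_ne l [] with rfl | hl
  · exact minimalPeriod_pos_of_mem_periodicPts ⟨1, one_pos, by simp [IsPeriodicPt, IsFixedPt]⟩
  · exact IsPeriodicPt.minimalPeriod_pos (length_pos_iff.2 hl)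
      ((iterate_rotate_one l _).trans (rotate_length l))

theorem rotationPeriod_le_length (hl : l ≠ []) : l.rotationPeriod ≤ l.length :=
  Nat.le_of_dvd (length_pos_iff.2 hl) (rotationPeriod_dvd_length l)

theorem rotationPeriod_rotate (l : List α) (n : ℕ) :
    (l.rotate n).rotationPeriod = l.rotationPeriod := by
  rw [rotationPeriod, ← iterate_rotate_one,
    minimalPeriod_apply_iterate (minimalPeriod_pos_iff_mem_periodicPts.1 (rotationPeriod_pos l))]
  rfl

theorem eq_flatten_replicate_take_rotationPeriod (l : List α) :
    l = (replicate (l.length / l.rotationPeriod) (l.take l.rotationPeriod)).flatten := by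
  rcases eq_or_ne l [] with rfl | hl
  · simp
  set d := l.rotationPeriod
  have hd := rotationPeriod_pos l
  have hdvd := rotationPeriod_dvd_length l
  have htake : (l.take d).length = d := length_take_of_le (rotationPeriod_le_length hl)
  apply ext_getElem?
  intro i
  rcases lt_or_ge i l.length with hi | hi
  · have hrot : l.rotate (i / d * d) = l :=
      rotate_eq_self_iff_rotationPeriod_dvd.2 (dvd_mul_left d _)
    rw [getElem?_flatten_replicate (by rwa [htake, Nat.div_mul_cancel hdvd]), htake,
      getElem?_take, if_pos (Nat.mod_lt _ hd)]
    calc l[i]? = l[(i % d + i / d * d) % l.length]? := by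
          rw [Nat.mod_add_div', Nat.mod_eq_of_lt hi]
      _ = (l.rotate (i / d * d))[i % d]? :=
          (getElem?_rotate ((Nat.mod_lt _ hd).trans_le (rotationPeriod_le_length hl))).symm
      _ = l[i % d]? := by rw [hrot]
  · rw [getElem?_eq_none hi, getElem?_eq_none]
    rwa [length_flatten_replicate, htake, Nat.div_mul_cancel hdvd]

theorem rotationPeriod_dvd_of_eq_flatten (h : l = (replicate k r).flatten) :
    l.rotationPeriod ∣ r.length := by
  rw [← rotate_eq_self_iff_rotationPeriod_dvd, h, rotate_flatten_replicate_length]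

def mapFiberConsEquiv (f : α → β) (b : β) (L : List β) :
    {l : List α // l.map f = b :: L} ≃ {a // f a = b} × {l : List α // l.map f = L} where
  toFun
    | ⟨a :: l, h⟩ => (⟨a, (cons.inj h).1⟩, ⟨l, (cons.inj h).2⟩)
  invFun p := ⟨p.1.1 :: p.2.1, by rw [map_cons, p.1.2, p.2.2]⟩
  left_inv
    | ⟨_ :: _, _⟩ => rfl
  right_inv _ := rfl

theorem tsum_prod_map_fiber (f : α → β) (w : α → ℝ≥0∞) (w' : β → ℝ≥0∞)
    (hw : ∀ b, ∑' a : {a // f a = b}, w a = w' b) (L : List β) :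
    ∑' l : {l : List α // l.map f = L}, (l.1.map w).prod = (L.map w').prod := by
  induction L with
  | nil =>
    rw [tsum_eq_single (⟨[], rfl⟩ : {l : List α // l.map f = []})
      fun l hl => absurd (Subtype.ext (map_eq_nil_iff.1 l.2)) hl]
    rfl
  | cons b L ih =>
    rw [← (mapFiberConsEquiv f b L).symm.tsum_eq, ENNReal.tsum_prod', map_cons, prod_cons,
      ← hw b, ← ih, ← ENNReal.tsum_mul_right]
    refine tsum_congr fun a => ?_
    rw [← ENNReal.tsum_mul_left]
    rfl

end List

namespace Cycle

open List

variable {α : Type*} {R : α → α → Prop}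

theorem chain_coe_rotate (l : List α) (n : ℕ) :
    Chain R (l.rotate n : Cycle α) ↔ Chain R (l : Cycle α) := by
  rw [coe_eq_coe.2 (IsRotated.forall l n)]

theorem chain_coe_flatten_replicate {r : List α} {k : ℕ} (hk : k ≠ 0) :
    Chain R ((replicate k r).flatten : Cycle α) ↔ Chain R (r : Cycle α) := by
  rcases eq_or_ne r [] with rfl | hr
  · simp
  have hF : (replicate k r).flatten ≠ [] := by simp [hr, hk]
  have hlast : (replicate k r).flatten.getLast hF = r.getLast hr := by
    simpa [getLast?_eq_some_getLast hF, getLast?_eq_some_getLast hr] using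
      getLast?_flatten_replicate hk r
  rw [chain_ne_nil R hF, chain_ne_nil R hr, hlast,
    isChain_cons_flatten_replicate (getLast?_eq_some_getLast hr) hk]

end Cycle

namespace EGraph

open List

section PrimitiveList

variable {α : Type*} {l r : List α} {k : ℕ}

theorem PrimitiveList.ne_nil (h : PrimitiveList l) : l ≠ [] := by
  rintro rfl
  simpa using h 0 [] rfl

theorem primitiveList_iff : PrimitiveList l ↔ l ≠ [] ∧ l.rotationPeriod = l.length := by
  refine ⟨fun h => ⟨h.ne_nil, ?_⟩, ?_⟩
  · exact Nat.eq_of_dvd_of_div_eq_one (rotationPeriod_dvd_length l)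
      (h _ _ (eq_flatten_replicate_take_rotationPeriod l))
  · rintro ⟨hl, hd⟩ k r rfl
    have hdvd := rotationPeriod_dvd_of_eq_flatten (l := (replicate k r).flatten) rfl
    rw [hd, length_flatten_replicate] at hdvd
    have hr : 0 < r.length := by
      rw [length_pos_iff]; rintro rfl; simp at hl
    have hk : k ≠ 0 := by rintro rfl; simp at hl
    have := Nat.le_of_dvd hr hdvd
    nlinarith [Nat.one_le_iff_ne_zero.2 hk]

theorem PrimitiveList.rotate (h : PrimitiveList l) (n : ℕ) : PrimitiveList (l.rotate n) := by
  rw [primitiveList_iff] at h ⊢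
  rwa [Ne, rotate_eq_nil_iff, rotationPeriod_rotate, length_rotate]

theorem PrimitiveList.rotate_injOn (h : PrimitiveList l) :
    Set.InjOn l.rotate (Set.Iio l.length) := by
  intro i hi j hj hij
  rw [← (primitiveList_iff.1 h).2] at hi hj
  exact iterate_injOn_Iio_minimalPeriod hi hj
    (by simpa only [iterate_rotate_one] using hij)

theorem primitiveList_take_rotationPeriod (hl : l ≠ []) :
    PrimitiveList (l.take l.rotationPeriod) := by
  set r := l.take l.rotationPeriod
  have hr : r.length = l.rotationPeriod := length_take_of_le (rotationPeriod_le_length hl)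
  have hr_ne : r ≠ [] := by rw [← length_pos_iff, hr]; exact rotationPeriod_pos l
  refine primitiveList_iff.2 ⟨hr_ne, Nat.dvd_antisymm (hr ▸ rotationPeriod_dvd_length r) ?_⟩
  have hl' : l = (replicate (l.length / l.rotationPeriod * (r.length / r.rotationPeriod))
      (r.take r.rotationPeriod)).flatten := by
    rw [flatten_replicate_mul, ← eq_flatten_replicate_take_rotationPeriod r,
      ← eq_flatten_replicate_take_rotationPeriod l]
  have := rotationPeriod_dvd_of_eq_flatten hl'
  rwa [length_take_of_le (rotationPeriod_le_length hr_ne), ← hr] at this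

theorem PrimitiveList.eq_take_rotationPeriod (hr : PrimitiveList r) (hk : k ≠ 0)
    (h : l = (replicate k r).flatten) : r = l.take l.rotationPeriod := by
  set d := l.rotationPeriod
  have hdr : d ∣ r.length := rotationPeriod_dvd_of_eq_flatten h
  have hrl : r.length ≤ l.length := by
    rw [h, length_flatten_replicate]; exact Nat.le_mul_of_pos_left _ (Nat.pos_of_ne_zero hk)
  have hl : l ≠ [] := by
    rw [← length_pos_iff]; exact (length_pos_iff.2 hr.ne_nil).trans_le hrl
  have htake : (l.take d).length = d := length_take_of_le (rotationPeriod_le_length hl)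
  have hr_take : r = l.take r.length := by
    rw [h, ← one_mul r.length, take_flatten_replicate (Nat.one_le_iff_ne_zero.2 hk)]; simp
  have hr_pow : r = (replicate (r.length / d) (l.take d)).flatten :=
    calc r = l.take r.length := hr_take
      _ = ((replicate (l.length / d) (l.take d)).flatten).take
            (r.length / d * (l.take d).length) := by
          rw [← eq_flatten_replicate_take_rotationPeriod l, htake, Nat.div_mul_cancel hdr]
      _ = (replicate (r.length / d) (l.take d)).flatten :=
          take_flatten_replicate (Nat.div_le_div_right hrl) _
  rw [hr_take, ← Nat.eq_of_dvd_of_div_eq_one hdr (hr _ _ hr_pow)]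

end PrimitiveList

variable {V : Type} {G H G' H' : EGraph V}

def AltNext (G H : EGraph V) (e f : G.E ⊕ H.E) : Prop :=
  ptgt G H e = psrc G H f ∧ e.isLeft ≠ f.isLeft

abbrev ClosedWalk (G H : EGraph V) : Type :=
  {l : List (G.E ⊕ H.E) // l ≠ [] ∧ Cycle.Chain (AltNext G H) (l : Cycle _)}

noncomputable def closedWalkSum (G H : EGraph V) : ℝ≥0∞ :=
  ∑' w : ClosedWalk G H, (w.1.map (pw G H)).prod / w.1.length

theorem AltPath.ext {p q : AltPath G H} (h : p.edges = q.edges) : p = q := by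
  cases p; cases q; cases h; rfl

theorem AltPath.isCycle_iff_chain (p : AltPath G H) :
    p.IsCycle ↔ Cycle.Chain (AltNext G H) (p.edges : Cycle _) := by
  have hchain : IsChain (AltNext G H) p.edges := p.chain
  rw [Cycle.chain_ne_nil _ p.ne, isChain_cons]
  simp [hchain, head?_eq_some_head p.ne, AltPath.IsCycle, AltPath.src, AltPath.tgt, AltNext]

abbrev OneCycle (G H : EGraph V) := {p : AltPath G H // p.IsOneCycle}

namespace OneCycle

theorem chain (q : OneCycle G H) : Cycle.Chain (AltNext G H) (q.1.edges : Cycle _) :=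
  (AltPath.isCycle_iff_chain q.1).1 q.2.1

def ofPrimitive (l : List (G.E ⊕ H.E)) (hl : PrimitiveList l)
    (h : Cycle.Chain (AltNext G H) (l : Cycle _)) : OneCycle G H :=
  ⟨⟨l, hl.ne_nil, ((Cycle.chain_ne_nil _ hl.ne_nil).1 h).tail⟩,
    (AltPath.isCycle_iff_chain _).2 h, hl⟩

def rotate (q : OneCycle G H) (n : ℕ) : OneCycle G H :=
  ofPrimitive (q.1.edges.rotate n) (q.2.2.rotate n) ((Cycle.chain_coe_rotate _ n).2 q.chain)

def toCirc (q : OneCycle G H) : Circ G H := Quotient.mk (cycSetoid G H) q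

@[simp]
theorem edges_rotate (q : OneCycle G H) (n : ℕ) : (q.rotate n).1.edges = q.1.edges.rotate n :=
  rfl

theorem toCirc_rotate (q : OneCycle G H) (n : ℕ) : (q.rotate n).toCirc = q.toCirc :=
  Quotient.sound ((cycSetoid G H).iseqv.symm ⟨n, rfl⟩)

theorem weight_rotate (q : OneCycle G H) (n : ℕ) : (q.rotate n).1.weight = q.1.weight := by
  simp only [AltPath.weight, edges_rotate, map_rotate]
  exact (rotate_perm _ n).prod_eq

theorem rotate_bijective (q : OneCycle G H) :
    Bijective fun i : Fin q.1.edges.length =>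
      (⟨q.rotate i, toCirc_rotate q i⟩ : {q' : OneCycle G H // q'.toCirc = q.toCirc}) := by
  refine ⟨fun i j hij => Fin.ext (q.2.2.rotate_injOn i.2 j.2 ?_), fun ⟨q', hq'⟩ => ?_⟩
  · exact congrArg (fun q' : {q' : OneCycle G H // q'.toCirc = q.toCirc} => q'.1.1.edges) hij
  · obtain ⟨n, hn⟩ := Quotient.exact hq'.symm
    refine ⟨⟨n % q.1.edges.length, Nat.mod_lt _ (length_pos_iff.2 q.1.ne)⟩, ?_⟩
    exact Subtype.ext (Subtype.ext (AltPath.ext (by rw [edges_rotate, rotate_mod, hn])))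

theorem tsum_fiber_toCirc (q : OneCycle G H) (f : ℝ≥0∞ → ℝ≥0∞) :
    ∑' q' : {q' : OneCycle G H // q'.toCirc = q.toCirc}, f q'.1.1.weight / q'.1.1.edges.length
      = f q.1.weight := by
  rw [← (Equiv.ofBijective _ (rotate_bijective q)).tsum_eq, tsum_fintype]
  simp only [Equiv.ofBijective_apply, weight_rotate, edges_rotate, length_rotate,
    Finset.sum_const, Finset.card_univ, Fintype.card_fin, nsmul_eq_mul]
  exact ENNReal.mul_div_cancel (by simpa using q.1.ne) (ENNReal.natCast_ne_top _)

def pow (q : OneCycle G H) (k : ℕ) : ClosedWalk G H :=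
  ⟨(replicate (k + 1) q.1.edges).flatten, by simp [q.1.ne],
    (Cycle.chain_coe_flatten_replicate k.succ_ne_zero).2 q.chain⟩

theorem pow_val (q : OneCycle G H) (k : ℕ) :
    (q.pow k).1 = (replicate (k + 1) q.1.edges).flatten :=
  rfl

theorem pow_injective : Injective fun x : OneCycle G H × ℕ => x.1.pow x.2 := by
  rintro ⟨q, k⟩ ⟨q', k'⟩ h
  have hl : (replicate (k + 1) q.1.edges).flatten = (replicate (k' + 1) q'.1.edges).flatten :=
    congrArg Subtype.val h
  obtain rfl : q = q' := Subtype.ext (AltPath.ext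
    ((q.2.2.eq_take_rotationPeriod k.succ_ne_zero rfl).trans
      (hl ▸ (q'.2.2.eq_take_rotationPeriod k'.succ_ne_zero rfl).symm)))
  have hlen := congrArg length hl
  rw [length_flatten_replicate, length_flatten_replicate] at hlen
  obtain rfl : k = k' := by
    have := Nat.eq_of_mul_eq_mul_right (length_pos_iff.2 q.1.ne) hlen
    omega
  rfl

theorem pow_surjective : Surjective fun x : OneCycle G H × ℕ => x.1.pow x.2 := by
  intro w
  set d := w.1.rotationPeriod
  have hk : w.1.length / d ≠ 0 :=
    (Nat.div_pos (rotationPeriod_le_length w.2.1) (rotationPeriod_pos _)).ne'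
  have hw := eq_flatten_replicate_take_rotationPeriod w.1
  have hchain := w.2.2
  rw [hw, Cycle.chain_coe_flatten_replicate hk] at hchain
  refine ⟨(ofPrimitive _ (primitiveList_take_rotationPeriod w.2.1) hchain, w.1.length / d - 1),
    Subtype.ext ?_⟩
  rw [pow_val, Nat.sub_add_cancel (Nat.one_le_iff_ne_zero.2 hk)]
  exact hw.symm

theorem pow_bijective : Bijective fun x : OneCycle G H × ℕ => x.1.pow x.2 :=
  ⟨pow_injective, pow_surjective⟩

end OneCycle

theorem measExt_eq_tsum_oneCycle (G H : EGraph V) :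
    measExt G H = ∑' q : OneCycle G H, mvalExt q.1.weight / q.1.edges.length := by
  rw [← (Equiv.sigmaFiberEquiv OneCycle.toCirc).tsum_eq, ENNReal.tsum_sigma', measExt]
  refine tsum_congr fun c => ?_
  induction c using Quotient.inductionOn with
  | h q => exact (OneCycle.tsum_fiber_toCirc q mvalExt).symm

theorem tsum_oneCycle_eq_closedWalkSum (G H : EGraph V) :
    ∑' q : OneCycle G H, mvalExt q.1.weight / q.1.edges.length = closedWalkSum G H := by
  rw [closedWalkSum, ← (Equiv.ofBijective _ OneCycle.pow_bijective).tsum_eq, ENNReal.tsum_prod']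
  refine tsum_congr fun q => ?_
  rw [mvalExt, div_eq_mul_inv, ← ENNReal.tsum_mul_right]
  refine tsum_congr fun k => ?_
  rw [Equiv.ofBijective_apply, OneCycle.pow_val, AltPath.weight, map_flatten, map_replicate,
    prod_flatten, map_replicate, prod_replicate, length_flatten_replicate, Nat.cast_mul,
    div_eq_mul_inv, div_eq_mul_inv, mul_assoc,
    ENNReal.mul_inv (Or.inr (ENNReal.natCast_ne_top _)) (Or.inl (by simp))]
  push_cast
  rfl

theorem measExt_eq_closedWalkSum (G H : EGraph V) : measExt G H = closedWalkSum G H :=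
  (measExt_eq_tsum_oneCycle G H).trans (tsum_oneCycle_eq_closedWalkSum G H)

section Map

variable (φ : G.E ⊕ H.E → G'.E ⊕ H'.E)

theorem cycleChain_map_iff (hφ : ∀ e f, AltNext G' H' (φ e) (φ f) ↔ AltNext G H e f)
    (l : List (G.E ⊕ H.E)) :
    Cycle.Chain (AltNext G' H') (l.map φ : Cycle _) ↔
      Cycle.Chain (AltNext G H) (l : Cycle _) := by
  rw [← Cycle.map_coe, Cycle.chain_map]
  simp only [hφ]

def ClosedWalk.map (hφ : ∀ e f, AltNext G' H' (φ e) (φ f) ↔ AltNext G H e f)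
    (w : ClosedWalk G H) : ClosedWalk G' H' :=
  ⟨w.1.map φ, by simpa using w.2.1, (cycleChain_map_iff φ hφ w.1).2 w.2.2⟩

def ClosedWalk.mapFiberEquiv (hφ : ∀ e f, AltNext G' H' (φ e) (φ f) ↔ AltNext G H e f)
    (W : ClosedWalk G' H') :
    {w // ClosedWalk.map φ hφ w = W} ≃ {l : List (G.E ⊕ H.E) // l.map φ = W.1} where
  toFun w := ⟨w.1.1, congrArg Subtype.val w.2⟩
  invFun l := ⟨⟨l.1, fun h => W.2.1 (by rw [← l.2, h, map_nil]),
    (cycleChain_map_iff φ hφ l.1).1 (by rw [l.2]; exact W.2.2)⟩, Subtype.ext l.2⟩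
  left_inv _ := rfl
  right_inv _ := rfl

theorem closedWalkSum_eq_of_map (hφ : ∀ e f, AltNext G' H' (φ e) (φ f) ↔ AltNext G H e f)
    (hw : ∀ e', ∑' e : {e // φ e = e'}, pw G H e = pw G' H' e') :
    closedWalkSum G H = closedWalkSum G' H' := by
  rw [closedWalkSum, ← (Equiv.sigmaFiberEquiv (ClosedWalk.map φ hφ)).tsum_eq,
    ENNReal.tsum_sigma', closedWalkSum]
  refine tsum_congr fun W => ?_
  have hlen (l : {l : List (G.E ⊕ H.E) // l.map φ = W.1}) : l.1.length = W.1.length := by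
    simpa using congrArg length l.2
  calc ∑' w : {w // ClosedWalk.map φ hφ w = W}, (w.1.1.map (pw G H)).prod / w.1.1.length
      = ∑' l : {l : List (G.E ⊕ H.E) // l.map φ = W.1},
          (l.1.map (pw G H)).prod / W.1.length := by
        rw [← (ClosedWalk.mapFiberEquiv φ hφ W).symm.tsum_eq]
        exact tsum_congr fun l => by rw [← hlen l]; rfl
    _ = (∑' l : {l : List (G.E ⊕ H.E) // l.map φ = W.1}, (l.1.map (pw G H)).prod)
          / W.1.length := by
        simp only [div_eq_mul_inv, ENNReal.tsum_mul_right]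
    _ = (W.1.map (pw G' H')).prod / W.1.length := by
        rw [tsum_prod_map_fiber φ (pw G H) (pw G' H') hw W.1]

end Map


def collapseEdge (H : EGraph V) (e : H.E) : (collapse H).E := ⟨(H.src e, H.tgt e), e, rfl, rfl⟩

theorem collapseEdge_eq_iff (H : EGraph V) (e : H.E) (p : (collapse H).E) :
    collapseEdge H e = p ↔ H.src e = p.1.1 ∧ H.tgt e = p.1.2 :=
  Subtype.ext_iff.trans Prod.ext_iff

def toCollapse (G H : EGraph V) : G.E ⊕ H.E → G.E ⊕ (collapse H).E :=
  Sum.map id (collapseEdge H)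

theorem altNext_toCollapse (G H : EGraph V) (e f : G.E ⊕ H.E) :
    AltNext G (collapse H) (toCollapse G H e) (toCollapse G H f) ↔ AltNext G H e f := by
  cases e <;> cases f <;> rfl

theorem tsum_fiber_toCollapse (G H : EGraph V) (e' : G.E ⊕ (collapse H).E) :
    ∑' e : {e // toCollapse G H e = e'}, pw G H e = pw G (collapse H) e' := by
  rw [← Equiv.subtypeSum.symm.tsum_eq, ENNReal.summable.tsum_sum ENNReal.summable]
  change ∑' a : {a // .inl a = e'}, G.w a +
    ∑' b : {b // .inr (collapseEdge H b) = e'}, H.w b = _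
  rcases e' with g | p
  · rw [tsum_eq_single (⟨g, rfl⟩ : {a : G.E // .inl a = (.inl g : G.E ⊕ (collapse H).E)})
        fun a ha => absurd (Subtype.ext (Sum.inl_injective a.2)) ha,
      ENNReal.tsum_eq_zero.2 fun b => absurd b.2 Sum.inr_ne_inl, add_zero]
    rfl
  · rw [ENNReal.tsum_eq_zero.2 fun a => absurd a.2 Sum.inl_ne_inr, zero_add]
    exact (Equiv.subtypeEquivRight fun b =>
      Sum.inr_injective.eq_iff.trans (collapseEdge_eq_iff H b p)).tsum_eq fun b => H.w b.1

end EGraph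

theorem stmt6_general {V : Type} (G H : EGraph V) :
    measExt G H = measExt G (collapse H) := by
  rw [measExt_eq_closedWalkSum, measExt_eq_closedWalkSum]
  exact closedWalkSum_eq_of_map (toCollapse G H) (altNext_toCollapse G H)
    (tsum_fiber_toCollapse G H)

/-- The measurement is invariant under collapsing parallel edges: for weighted graphs
`G`, `H` with weights in `(0,1]`, and `Ĥ` the simple collapse of `H` (edge weights the
sums of the weights of parallel edges), extending the measurement by
`⟪F,G⟫ = Σ_{π ∈ C(F,G)} Σ_{k ≥ 1} ω(π)^k / k`, one has `⟪G, H⟫ = ⟪G, Ĥ⟫`. -/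
theorem stmt6 {V : Type} [DecidableEq V] (G H : EGraph V)
    [Countable G.E] [Countable H.E]
    (hwG : ∀ e, 0 < G.w e ∧ G.w e ≤ 1)
    (hwH : ∀ e, 0 < H.w e ∧ H.w e ≤ 1) :
    measExt G H = measExt G (collapse H) :=
  stmt6_general G H
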